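/- Let m ≥ 1 be a natural number, A0, A1 nonempty finite index types, and let Θ : Matrix (Fin m) (Fin m) ℂ →ₗ (Matrix A0 A0 ℂ →ₗ Matrix A1 A1 ℂ) be a state-to-channel supermap satisfying: (i) the linear map ρ ↦ J(Θ[ρ]) is completely positive; (ii) Θ[ρ] is trace-preserving for every density matrix ρ; (iii) the DISC covariance condition 𝒟 ∘ Θ[ρ] ∘ 𝒟 = Θ[𝒟(ρ)] holds for all ρ ∈ Matrix (Fin m) (Fin m) ℂ. If Θ[φ⁺_m] = N for a quantum channel N, where φ⁺_m i j = 1/m, then r_Δ(N) ≤ m, where r_Δ(N) := sInf {t : ℝ | 0 ≤ t ∧ (t • 𝒟_{full}(J(N)) − J(N)).PosSemidef}. (Hence the exact single-shot coherence cost under DISC is at least the dephasing log-robustness: LR_Δ(N) ≤ C⁰_DISC(N).) -/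

import Mathlib

open Matrix Kronecker ComplexOrder

noncomputable section

/-- Choi matrix of a linear map between matrix algebras. -/
def choi {ι κ : Type*} [Fintype ι] [DecidableEq ι]
    (Φ : Matrix ι ι ℂ →ₗ[ℂ] Matrix κ κ ℂ) : Matrix (ι × κ) (ι × κ) ℂ :=
  Matrix.of fun p q => Φ (Matrix.single p.1 q.1 1) p.2 q.2

/-- Completely positive: the Choi matrix is positive semidefinite. -/
def IsCP {ι κ : Type*} [Fintype ι] [DecidableEq ι] [Fintype κ]
    (Φ : Matrix ι ι ℂ →ₗ[ℂ] Matrix κ κ ℂ) : Prop := (choi Φ).PosSemidef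

/-- Trace preserving. -/
def IsTP {ι κ : Type*} [Fintype ι] [Fintype κ]
    (Φ : Matrix ι ι ℂ →ₗ[ℂ] Matrix κ κ ℂ) : Prop := ∀ X, (Φ X).trace = X.trace

/-- Quantum channel: CP and TP. -/
def IsChannel {ι κ : Type*} [Fintype ι] [DecidableEq ι] [Fintype κ]
    (Φ : Matrix ι ι ℂ →ₗ[ℂ] Matrix κ κ ℂ) : Prop := IsCP Φ ∧ IsTP Φ

/-- Max-relative robustness `r(X‖Y)` between two maps. -/
def maxRelRobust {ι κ : Type*} [Fintype ι] [DecidableEq ι] [Fintype κ]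
    (X Y : Matrix ι ι ℂ →ₗ[ℂ] Matrix κ κ ℂ) : ℝ :=
  sInf {t : ℝ | 0 ≤ t ∧ (t • choi Y - choi X).PosSemidef}

/-- Dephasing (decoherence) map as a linear map. -/
def deph {ι : Type*} [DecidableEq ι] : Matrix ι ι ℂ →ₗ[ℂ] Matrix ι ι ℂ where
  toFun M := Matrix.of fun i j => if i = j then M i j else 0
  map_add' X Y := by
    ext i j
    by_cases h : i = j <;> simp [h]
  map_smul' c X := by
    ext i j
    by_cases h : i = j <;> simp [h]

/-- Classical map: invariant under dephasing of input and output. -/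
def IsClassical {ι κ : Type*} [DecidableEq ι] [DecidableEq κ]
    (Φ : Matrix ι ι ℂ →ₗ[ℂ] Matrix κ κ ℂ) : Prop := deph ∘ₗ Φ ∘ₗ deph = Φ

/-- Coherence robustness `r_C(N)`: robustness relative to classical channels. -/
def coherenceRobust {ι κ : Type*} [Fintype ι] [DecidableEq ι] [Fintype κ] [DecidableEq κ]
    (N : Matrix ι ι ℂ →ₗ[ℂ] Matrix κ κ ℂ) : ℝ :=
  sInf {t : ℝ | 0 ≤ t ∧ ∃ E₀ : Matrix ι ι ℂ →ₗ[ℂ] Matrix κ κ ℂ,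
    IsChannel E₀ ∧ IsClassical E₀ ∧ (t • choi E₀ - choi N).PosSemidef}

/-- The linear map `ρ ↦ J(Θ[ρ])` associated with a state-to-channel supermap. -/
def choiMapOf {ι A0 A1 : Type*} [Fintype ι] [DecidableEq ι] [Fintype A0] [DecidableEq A0]
    (Θ : Matrix ι ι ℂ →ₗ[ℂ] (Matrix A0 A0 ℂ →ₗ[ℂ] Matrix A1 A1 ℂ)) :
    Matrix ι ι ℂ →ₗ[ℂ] Matrix (A0 × A1) (A0 × A1) ℂ where
  toFun ρ := choi (Θ ρ)
  map_add' X Y := by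
    ext p q
    simp [choi, map_add]
  map_smul' c X := by
    ext p q
    simp [choi, _root_.map_smul]

/-- The maximally coherent state `φ⁺_m i j = 1/m`. -/
def maxCoh (m : ℕ) : Matrix (Fin m) (Fin m) ℂ :=
  Matrix.of fun _ _ => (1 : ℂ) / (m : ℂ)


/-- Dephasing robustness `r_Δ(N)`. -/
def dephRobust {ι κ : Type*} [Fintype ι] [DecidableEq ι] [Fintype κ] [DecidableEq κ]
    (N : Matrix ι ι ℂ →ₗ[ℂ] Matrix κ κ ℂ) : ℝ :=
  sInf {t : ℝ | 0 ≤ t ∧ (t • deph (choi N) - choi N).PosSemidef}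

/-- A CP map sends PSD matrices to PSD matrices. -/
lemma cp_apply_psd {ι κ : Type*} [Fintype ι] [DecidableEq ι] [Fintype κ] [DecidableEq κ]
    (Φ : Matrix ι ι ℂ →ₗ[ℂ] Matrix κ κ ℂ) (hΦ : (choi Φ).PosSemidef)
    {ρ : Matrix ι ι ℂ} (hρ : ρ.PosSemidef) : (Φ ρ).PosSemidef := by
  obtain ⟨A, hA⟩ : ∃ A : Matrix (ι × κ) (ι × κ) ℂ, choi Φ = Aᴴ * A := by
    open scoped MatrixOrder in
    have h0 : 0 ≤ choi Φ := Matrix.nonneg_iff_posSemidef.mpr hΦ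
    open scoped MatrixOrder in
    exact ⟨CFC.sqrt (choi Φ), by
      rw [← Matrix.star_eq_conjTranspose, (CFC.sqrt_nonneg (choi Φ)).isSelfAdjoint.star_eq,
        CFC.sqrt_mul_sqrt_self (choi Φ) h0]⟩
  -- Kraus operators
  set K : (ι × κ) → Matrix κ ι ℂ := fun a => Matrix.of fun k i => star (A a (i, k)) with hK
  have key : Φ ρ = ∑ a : ι × κ, K a * ρ * (K a)ᴴ := by
    have hexp : Φ ρ = ∑ i : ι, ∑ j : ι, ρ i j • Φ (Matrix.single i j 1) := by
      conv_lhs => rw [matrix_eq_sum_single ρ]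
      rw [map_sum]
      refine Finset.sum_congr rfl fun i _ => ?_
      rw [map_sum]
      refine Finset.sum_congr rfl fun j _ => ?_
      have h1 : Matrix.single i j (ρ i j) = ρ i j • Matrix.single i j (1:ℂ) := by
        rw [smul_single, smul_eq_mul, mul_one]
      rw [h1, LinearMap.map_smul]
    ext k l
    rw [hexp]
    have hchoi : ∀ i j : ι, Φ (Matrix.single i j 1) k l
        = ∑ a : ι × κ, star (A a (i, k)) * A a (j, l) := by
      intro i j
      have : Φ (Matrix.single i j 1) k l = choi Φ (i, k) (j, l) := rfl
      rw [this, hA, Matrix.mul_apply]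
      simp [Matrix.conjTranspose_apply]
    simp only [Matrix.sum_apply, Matrix.smul_apply, smul_eq_mul, hchoi,
      Matrix.mul_apply, Matrix.conjTranspose_apply, hK, Matrix.of_apply, star_star,
      Finset.mul_sum, Finset.sum_mul]
    conv_rhs => rw [Finset.sum_comm]
    conv_rhs => enter [2, j]; rw [Finset.sum_comm]
    conv_lhs => rw [Finset.sum_comm]
    refine Finset.sum_congr rfl fun j _ => Finset.sum_congr rfl fun i _ =>
      Finset.sum_congr rfl fun a _ => by ring
  rw [key]
  exact Finset.sum_induction _ _ (fun _ _ h1 h2 => h1.add h2) Matrix.PosSemidef.zero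
    (fun a _ => hρ.mul_mul_conjTranspose_same (K a))

/-- Dephasing of the Choi matrix is the Choi matrix of the doubly-dephased map. -/
lemma deph_choi_eq {ι κ : Type*} [Fintype ι] [DecidableEq ι] [Fintype κ] [DecidableEq κ]
    (N : Matrix ι ι ℂ →ₗ[ℂ] Matrix κ κ ℂ) :
    deph (choi N) = choi (deph ∘ₗ N ∘ₗ deph) := by
  ext ⟨i, k⟩ ⟨j, l⟩
  have hde : (deph (Matrix.single i j (1:ℂ)) : Matrix ι ι ℂ)
      = if i = j then Matrix.single i j 1 else 0 := by
    ext a b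
    by_cases hab : a = b <;>
      simp [deph, Matrix.single, hab] <;> aesop
  show deph (choi N) (i, k) (j, l) = choi (deph ∘ₗ N ∘ₗ deph) (i, k) (j, l)
  simp only [choi, LinearMap.comp_apply, Matrix.of_apply, hde]
  by_cases hij : i = j
  · subst hij
    by_cases hkl : k = l <;> simp [deph, choi, hkl, Prod.ext_iff]
  · simp [deph, choi, hij, Prod.ext_iff]

/-- Lower bound on the exact single-shot DISC coherence cost: if a
dephasing-covariant state-to-channel supermap on an `m`-dimensional coherence
resource simulates the channel `N`, then `r_Δ(N) ≤ m`. -/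
theorem dephRobust_le_of_DISC_simulation
    {m : ℕ} (hm : 1 ≤ m)
    {A0 A1 : Type*}
    [Fintype A0] [DecidableEq A0] [Nonempty A0]
    [Fintype A1] [DecidableEq A1] [Nonempty A1]
    (Θ : Matrix (Fin m) (Fin m) ℂ →ₗ[ℂ] (Matrix A0 A0 ℂ →ₗ[ℂ] Matrix A1 A1 ℂ))
    (hCP : (choi (choiMapOf Θ)).PosSemidef)
    (hTP : ∀ ρ : Matrix (Fin m) (Fin m) ℂ, ρ.PosSemidef → ρ.trace = 1 → IsTP (Θ ρ))
    (hDISC : ∀ ρ : Matrix (Fin m) (Fin m) ℂ,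
      deph ∘ₗ (Θ ρ) ∘ₗ deph = Θ (deph ρ))
    (N : Matrix A0 A0 ℂ →ₗ[ℂ] Matrix A1 A1 ℂ) (hN : IsChannel N)
    (hsim : Θ (maxCoh m) = N) :
    dephRobust N ≤ (m : ℝ) := by
  have hm0 : (m : ℂ) ≠ 0 := by
    exact_mod_cast Nat.cast_ne_zero.mpr (by omega)
  -- dephased maximally coherent state is (1/m) • 1
  have hdeph_max : deph (maxCoh m) = ((1 : ℂ) / m) • (1 : Matrix (Fin m) (Fin m) ℂ) := by
    ext i j
    by_cases h : i = j <;> simp [deph, maxCoh, Matrix.one_apply, h]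
  -- key identity
  have hchoiN : choi N = choiMapOf Θ (maxCoh m) := by rw [← hsim]; rfl
  have hdc : deph (choi N) = choiMapOf Θ (deph (maxCoh m)) := by
    rw [deph_choi_eq, ← hsim, hDISC]; rfl
  have hdiff : (m : ℝ) • deph (choi N) - choi N
      = choiMapOf Θ ((1 : Matrix (Fin m) (Fin m) ℂ) - maxCoh m) := by
    rw [hdc, hchoiN, map_sub]
    congr 1
    have : ((m : ℝ) • choiMapOf Θ (deph (maxCoh m)) : Matrix (A0 × A1) (A0 × A1) ℂ)
        = (m : ℂ) • choiMapOf Θ (deph (maxCoh m)) := by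
      ext p q
      simp [Complex.real_smul]
    rw [this, ← LinearMap.map_smul, hdeph_max, smul_smul, mul_one_div, div_self hm0, one_smul]
  -- 1 - maxCoh is PSD (it is a hermitian projection)
  have hP2 : maxCoh m * maxCoh m = maxCoh m := by
    ext i j
    simp only [Matrix.mul_apply, maxCoh, Matrix.of_apply, Finset.sum_const,
      Finset.card_univ, Fintype.card_fin, nsmul_eq_mul]
    field_simp
  have hPH : (maxCoh m)ᴴ = maxCoh m := by
    ext i j
    simp [maxCoh, Matrix.conjTranspose_apply]
  have hpsd : ((1 : Matrix (Fin m) (Fin m) ℂ) - maxCoh m).PosSemidef := by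
    have hMH : ((1 : Matrix (Fin m) (Fin m) ℂ) - maxCoh m)ᴴ
        = (1 : Matrix (Fin m) (Fin m) ℂ) - maxCoh m := by
      rw [Matrix.conjTranspose_sub, Matrix.conjTranspose_one, hPH]
    have : (1 : Matrix (Fin m) (Fin m) ℂ) - maxCoh m
        = ((1 : Matrix (Fin m) (Fin m) ℂ) - maxCoh m)ᴴ
          * ((1 : Matrix (Fin m) (Fin m) ℂ) - maxCoh m) := by
      rw [hMH, sub_mul, one_mul, mul_sub, mul_one, hP2, sub_self, sub_zero]
    rw [this]
    exact Matrix.posSemidef_conjTranspose_mul_self _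
  have hmem : (m : ℝ) ∈ {t : ℝ | 0 ≤ t ∧ (t • deph (choi N) - choi N).PosSemidef} := by
    refine ⟨Nat.cast_nonneg m, ?_⟩
    rw [hdiff]
    exact cp_apply_psd (choiMapOf Θ) hCP hpsd
  exact csInf_le ⟨0, fun t ht => ht.1⟩ hmem

end
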